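/- arXiv:2311.18408 — 4 statements merged into one kernel-verified Lean document; each statement's English description precedes it below -/
import Mathlib

section
/- In the free abelian group ℤ^n with standard inverse-closed generating set X of size 2n, the geodesic growth series equals 1 + Σ_{j=1}^{n} (-1)^{n-j} 2^j · C(n,j) · (jz)/(1-jz); equivalently, the number of geodesic words of length m ≥ 1 over X is Σ_{j=1}^{n} (-1)^{n-j} 2^j · C(n,j) · j^m. -/
/-!
A word over `{e_i^{±1}}` is geodesic iff no generator occurs together with its inverse, i.e. iff
the sign of each letter is a function of its index. So the geodesic words of length `m` lying
over a word `f` in the indices correspond to the sign choices on the image of `f`, and there are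
`∑_f 2^{|im f|}` of them. Expanding `∏_i (2 + [i ∉ S] (-1)) = 2^{|S|}` gives
`2^{|S|} = ∑_{T ⊇ S} (-1)^{n-|T|} 2^{|T|}`; substituting `S = im f` and exchanging the sums
turns the count into `∑_T (-1)^{n-|T|} 2^{|T|} |T|^m`, since `|T|^m` words `f` have image in `T`.
Grouping `T` by cardinality gives the formula, whose `j = 0` term vanishes because `m ≥ 1`.
-/

/-- The element of `ℤⁿ` represented by a word over the standard inverse-closed
generating set, modeled as `Fin n × Bool` where `(i, true)` is `e_i` and
`(i, false)` is `e_i⁻¹`. -/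
def zPowEval {n : ℕ} (w : List (Fin n × Bool)) : Fin n → ℤ :=
  fun i => (w.count (i, true) : ℤ) - (w.count (i, false) : ℤ)

/-- A word over the standard generators of `ℤⁿ` is geodesic iff its length equals
the word length `Σᵢ |gᵢ|` of the element `g` of `ℤⁿ` that it represents. -/
def IsZnGeodesic {n : ℕ} (w : List (Fin n × Bool)) : Prop :=
  (w.length : ℤ) = ∑ i : Fin n, |zPowEval w i|

open Finset

theorem List.length_eq_sum_count {α : Type*} [BEq α] [LawfulBEq α] [Fintype α] (w : List α) :
    w.length = ∑ a, w.count a := by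
  classical
  induction w with
  | nil => simp
  | cons x w ih =>
    simp only [List.count_cons, sum_add_distrib, ← ih, beq_iff_eq]
    rw [sum_ite_eq]
    simp

theorem forall_not_true_or_not_false_iff {ι : Type*} {p : ι × Bool → Prop} :
    (∀ i, ¬p (i, true) ∨ ¬p (i, false)) ↔ ∀ x, p x → ∀ y, p y → x.1 = y.1 → x.2 = y.2 := by
  constructor
  · rintro h ⟨i, a⟩ hx ⟨j, b⟩ hy (rfl : i = j)
    cases a <;> cases b <;> have := h i <;> tauto
  · intro h i
    by_contra! hi
    exact Bool.noConfusion (h _ hi.1 _ hi.2 rfl)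

section SignedAlphabet

variable {ι κ : Type*} [Fintype ι] [DecidableEq ι]

theorem sum_superset_neg_one_pow_mul_two_pow (S : Finset ι) :
    ∑ T, (if S ⊆ T then (-1 : ℤ) ^ #Tᶜ * 2 ^ #T else 0) = 2 ^ #S := by
  have hprod : ∀ T : Finset ι, ∏ i ∈ Tᶜ, (if i ∈ S then 0 else -1 : ℤ) =
      if S ⊆ T then (-1) ^ #Tᶜ else 0 := by
    intro T
    split_ifs with h
    · rw [prod_congr rfl fun i hi => if_neg fun hS => mem_compl.1 hi (h hS), prod_const]
    · obtain ⟨i, hiS, hiT⟩ := not_subset.1 h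
      exact prod_eq_zero (mem_compl.2 hiT) (if_pos hiS)
  calc ∑ T, (if S ⊆ T then (-1 : ℤ) ^ #Tᶜ * 2 ^ #T else 0)
      = ∑ T, (∏ _i ∈ T, (2 : ℤ)) * ∏ i ∈ Tᶜ, (if i ∈ S then 0 else -1 : ℤ) := by
        refine sum_congr rfl fun T _ => ?_
        rw [hprod, prod_const]
        split_ifs <;> ring
    _ = ∏ i, (2 + if i ∈ S then 0 else -1 : ℤ) := (Fintype.prod_add _ _).symm
    _ = ∏ i, (if i ∈ S then 2 else 1 : ℤ) :=
        Fintype.prod_congr _ _ fun i => by split_ifs <;> norm_num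
    _ = 2 ^ #S := by rw [Fintype.prod_ite_mem, prod_const]

variable [Fintype κ] [DecidableEq κ]

def IsSignConsistent (v : κ → ι × Bool) : Prop :=
  ∀ k l, (v k).1 = (v l).1 → (v k).2 = (v l).2

instance : DecidablePred (IsSignConsistent (ι := ι) (κ := κ)) := fun v => by
  unfold IsSignConsistent; infer_instance

theorem card_filter_isSignConsistent_fst_eq (f : κ → ι) :
    #{v : κ → ι × Bool | IsSignConsistent v ∧ Prod.fst ∘ v = f} = 2 ^ #(univ.image f) := by
  set signs : Finset ι → κ → ι × Bool := fun T k => (f k, decide (f k ∈ T))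
  have hinj : Set.InjOn signs (univ.image f).powerset := by
    intro T hT T' hT' h
    have key : ∀ k, f k ∈ T ↔ f k ∈ T' := fun k => by
      simpa [signs] using congrFun h k
    ext i
    constructor
    · intro hi
      obtain ⟨k, -, rfl⟩ := mem_image.1 (mem_powerset.1 hT hi)
      exact (key k).1 hi
    · intro hi
      obtain ⟨k, -, rfl⟩ := mem_image.1 (mem_powerset.1 hT' hi)
      exact (key k).2 hi
  have himage : ({v | IsSignConsistent v ∧ Prod.fst ∘ v = f} : Finset (κ → ι × Bool)) =
      (univ.image f).powerset.image signs := by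
    ext v
    simp only [mem_filter, mem_univ, true_and, mem_image, mem_powerset]
    constructor
    · rintro ⟨hv, rfl⟩
      refine ⟨({k | (v k).2} : Finset κ).image (Prod.fst ∘ v), image_subset_image (subset_univ _),
        funext fun k => Prod.ext rfl ?_⟩
      have hmem : (v k).1 ∈ ({k | (v k).2} : Finset κ).image (Prod.fst ∘ v) ↔ (v k).2 := by
        simp only [mem_image, mem_filter, mem_univ, true_and, Function.comp_apply]
        exact ⟨fun ⟨l, hl, hlk⟩ => hv l k hlk ▸ hl, fun hk => ⟨k, hk, rfl⟩⟩
      simp only [signs, Function.comp_apply, hmem, Bool.decide_eq_true]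
    · rintro ⟨T, -, rfl⟩
      refine ⟨fun k l h => ?_, rfl⟩
      simp only [signs] at h ⊢
      rw [h]
  rw [himage, card_image_of_injOn hinj, card_powerset]

theorem card_isSignConsistent_eq_sum :
    #{v : κ → ι × Bool | IsSignConsistent v} = ∑ f : κ → ι, 2 ^ #(univ.image f) := by
  rw [card_eq_sum_card_fiberwise (f := fun v => Prod.fst ∘ v) (t := univ) fun _ _ => mem_univ _]
  refine sum_congr rfl fun f _ => ?_
  rw [filter_filter, card_filter_isSignConsistent_fst_eq]

theorem sum_two_pow_card_image :
    ∑ f : κ → ι, (2 : ℤ) ^ #(univ.image f) =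
      ∑ T : Finset ι, (-1 : ℤ) ^ #Tᶜ * 2 ^ #T * #T ^ Fintype.card κ := by
  have hcount : ∀ T : Finset ι, (#T ^ Fintype.card κ : ℤ) =
      ∑ f : κ → ι, if univ.image f ⊆ T then 1 else 0 := by
    intro T
    have hpi : ({f | univ.image f ⊆ T} : Finset (κ → ι)) = Fintype.piFinset fun _ => T := by
      ext f
      simp [image_subset_iff]
    rw [sum_boole, hpi, Fintype.card_piFinset, prod_const, card_univ, Nat.cast_pow]
  calc ∑ f : κ → ι, (2 : ℤ) ^ #(univ.image f)
      = ∑ f : κ → ι, ∑ T, (if univ.image f ⊆ T then (-1 : ℤ) ^ #Tᶜ * 2 ^ #T else 0) :=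
        sum_congr rfl fun f _ => (sum_superset_neg_one_pow_mul_two_pow _).symm
    _ = ∑ T : Finset ι, ∑ f : κ → ι,
          (-1 : ℤ) ^ #Tᶜ * 2 ^ #T * (if univ.image f ⊆ T then 1 else 0) := by
        rw [sum_comm]
        simp only [mul_ite, mul_one, mul_zero]
    _ = ∑ T : Finset ι, (-1 : ℤ) ^ #Tᶜ * 2 ^ #T * #T ^ Fintype.card κ := by
        simp only [hcount, mul_sum]

theorem card_isSignConsistent :
    (#{v : κ → ι × Bool | IsSignConsistent v} : ℤ) =
      ∑ T : Finset ι, (-1 : ℤ) ^ #Tᶜ * 2 ^ #T * #T ^ Fintype.card κ := by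
  rw [← sum_two_pow_card_image, card_isSignConsistent_eq_sum]
  norm_cast

end SignedAlphabet

theorem isZnGeodesic_iff {n : ℕ} (w : List (Fin n × Bool)) :
    IsZnGeodesic w ↔ ∀ i, (i, true) ∉ w ∨ (i, false) ∉ w := by
  have hlen : w.length = ∑ i, (w.count (i, true) + w.count (i, false)) := by
    simp only [w.length_eq_sum_count, Fintype.sum_prod_type, Fintype.sum_bool]
  unfold IsZnGeodesic zPowEval
  rw [hlen, Nat.cast_sum, eq_comm, sum_eq_sum_iff_of_le fun i _ => by
    simpa using abs_sub (w.count (i, true) : ℤ) (w.count (i, false))]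
  simp only [mem_univ, true_implies, ← List.count_eq_zero]
  refine forall_congr' fun i => ?_
  grind

theorem isZnGeodesic_ofFn_iff {n m : ℕ} (v : Fin m → Fin n × Bool) :
    IsZnGeodesic (List.ofFn v) ↔ IsSignConsistent v := by
  simp only [isZnGeodesic_iff, List.mem_ofFn', forall_not_true_or_not_false_iff,
    Set.forall_mem_range, IsSignConsistent]

theorem setOf_isZnGeodesic_eq_image_ofFn (n m : ℕ) :
    {w : List (Fin n × Bool) | w.length = m ∧ IsZnGeodesic w} =
      List.ofFn '' {v : Fin m → Fin n × Bool | IsSignConsistent v} := by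
  ext w
  constructor
  · rintro ⟨rfl, hw⟩
    exact ⟨w.get, (isZnGeodesic_ofFn_iff w.get).1 (by rwa [List.ofFn_get]), List.ofFn_get w⟩
  · rintro ⟨v, hv, rfl⟩
    exact ⟨List.length_ofFn, (isZnGeodesic_ofFn_iff v).2 hv⟩

/-- In `ℤⁿ` with the standard inverse-closed generating set of size `2n`, the number of
geodesic words of length `m ≥ 1` is `Σ_{j=1}^n (-1)^{n-j} 2^j C(n,j) j^m`; equivalently
the geodesic growth series is `1 + Σ_{j=1}^n (-1)^{n-j} 2^j C(n,j) jz/(1-jz)`. -/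
theorem geodesic_growth_Zn (n m : ℕ) (hm : 1 ≤ m) :
    (Set.ncard {w : List (Fin n × Bool) | w.length = m ∧ IsZnGeodesic w} : ℤ) =
      ∑ j ∈ Finset.Icc 1 n, (-1 : ℤ) ^ (n - j) * 2 ^ j * (n.choose j) * (j : ℤ) ^ m := by
  rw [setOf_isZnGeodesic_eq_image_ofFn, Set.ncard_image_of_injective _ List.ofFn_injective,
    ← coe_filter_univ, Set.ncard_coe_finset, card_isSignConsistent, ← powerset_univ]
  simp only [card_compl, Fintype.card_fin]
  rw [sum_powerset_apply_card (fun j => (-1 : ℤ) ^ (n - j) * 2 ^ j * j ^ m), card_univ,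
    Fintype.card_fin, Nat.range_succ_eq_Icc_zero, ← insert_Icc_add_one_left_eq_Icc n.zero_le,
    sum_insert (by simp)]
  simp only [Nat.cast_zero, zero_pow (by omega : m ≠ 0), mul_zero, smul_zero, zero_add,
    nsmul_eq_mul]
  exact sum_congr rfl fun j _ => by ring
end

section
/- Let X be a finite alphabet. The class of regular languages over X is closed under the cyclic permutation operation: if L is regular then Cyc(L) = {vu : uv ∈ L} is regular. -/
/-!
Let `M` be a DFA for `L`. A rotation `v ++ u` of a word `u ++ v ∈ L` is classified by the state
`q` that `M` reaches after reading `u`: then `v` leads `M` from `q` to an accepting state. Hence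
`Cyc(L)` is the finite union over `q` of the products `acceptsFrom q * wordsTo q`, and it suffices
that regular languages are closed under products and finite unions. Both follow from
Myhill–Nerode, since a left quotient of `l * m` is determined by a left quotient of `l` together
with a set of left quotients of `m`.
-/

/-- The set of all rotations (cyclic permutations) of words of a language. -/
def cycLang {X : Type*} (L : Language X) : Language X :=
  {w | ∃ u v : List X, u ++ v ∈ L ∧ w = v ++ u}

namespace Language

variable {α : Type*}

theorem leftQuotient_mul (l m : Language α) (x : List α) :
    (l * m).leftQuotient x =
      l.leftQuotient x * m + ⨆ c ∈ {c | ∃ a ∈ l, a ++ c = x}, m.leftQuotient c := by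
  ext y
  simp only [mem_leftQuotient, mem_add, mem_mul, mem_iSup, Set.mem_ofPred_eq,
    List.append_eq_append_iff]
  constructor
  · rintro ⟨a, ha, b, hb, ⟨c, rfl, rfl⟩ | ⟨c, rfl, rfl⟩⟩
    · exact .inr ⟨c, ⟨a, ha, rfl⟩, hb⟩
    · exact .inl ⟨c, ha, b, hb, rfl⟩
  · rintro (⟨c, hc, b, hb, rfl⟩ | ⟨c, ⟨a, ha, rfl⟩, hc⟩)
    · exact ⟨x ++ c, hc, b, hb, .inr ⟨c, rfl, rfl⟩⟩
    · exact ⟨a, ha, c ++ y, hc, .inl ⟨c, rfl, rfl⟩⟩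

theorem leftQuotient_iSup {ι : Sort*} (l : ι → Language α) (x : List α) :
    (⨆ i, l i).leftQuotient x = ⨆ i, (l i).leftQuotient x := by
  ext y
  simp only [mem_leftQuotient, mem_iSup]

theorem IsRegular.mul {l m : Language α} (hl : l.IsRegular) (hm : m.IsRegular) :
    (l * m).IsRegular := by
  refine .of_finite_range_leftQuotient <|
    ((hl.finite_range_leftQuotient.prod hm.finite_range_leftQuotient.powerset).image
      fun p : Language α × Set (Language α) ↦ p.1 * m + sSup p.2).subset ?_
  rintro _ ⟨x, rfl⟩
  refine ⟨(l.leftQuotient x, m.leftQuotient '' {c | ∃ a ∈ l, a ++ c = x}),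
    ⟨⟨x, rfl⟩, Set.image_subset_range _ _⟩, ?_⟩
  dsimp only
  rw [sSup_image, leftQuotient_mul]

theorem IsRegular.iSup {ι : Type*} [Finite ι] {l : ι → Language α}
    (hl : ∀ i, (l i).IsRegular) : (⨆ i, l i).IsRegular := by
  refine .of_finite_range_leftQuotient <|
    ((Set.Finite.pi fun i ↦ (hl i).finite_range_leftQuotient).image
      fun f : ι → Language α ↦ ⨆ i, f i).subset ?_
  rintro _ ⟨x, rfl⟩
  exact ⟨fun i ↦ (l i).leftQuotient x, fun i _ ↦ ⟨x, rfl⟩, (leftQuotient_iSup l x).symm⟩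

end Language

namespace DFA

def wordsTo {α σ : Type*} (M : DFA α σ) (q : σ) : Language α := {x | M.eval x = q}

variable {α σ : Type*} [Finite σ] (M : DFA α σ)

theorem isRegular_acceptsFrom (s : σ) : (M.acceptsFrom s).IsRegular :=
  have := Fintype.ofFinite σ
  Language.isRegular_iff.mpr ⟨σ, inferInstance, ⟨M.step, s, M.accept⟩, rfl⟩

theorem isRegular_wordsTo (q : σ) : (M.wordsTo q).IsRegular :=
  have := Fintype.ofFinite σ
  Language.isRegular_iff.mpr ⟨σ, inferInstance, ⟨M.step, M.start, {q}⟩, rfl⟩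

end DFA

theorem cycLang_accepts {α σ : Type*} (M : DFA α σ) :
    cycLang M.accepts = ⨆ q, M.acceptsFrom q * M.wordsTo q := by
  ext w
  simp only [cycLang, Language.mem_iSup, DFA.mem_accepts, DFA.wordsTo,
    DFA.eval, DFA.evalFrom_of_append]
  constructor
  · rintro ⟨u, v, huv, rfl⟩
    exact ⟨_, v, huv, u, rfl, rfl⟩
  · rintro ⟨_, v, hv, u, rfl, rfl⟩
    exact ⟨u, v, hv, rfl⟩

theorem regular_closed_under_cyc_general {X : Type*} (L : Language X)
    (hL : L.IsRegular) : (cycLang L).IsRegular := by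
  obtain ⟨Q, _, M, rfl⟩ := hL
  rw [cycLang_accepts]
  exact .iSup fun q ↦ (M.isRegular_acceptsFrom q).mul (M.isRegular_wordsTo q)

/-- Regular languages over a finite alphabet are closed under cyclic permutation. -/
theorem regular_closed_under_cyc {X : Type*} [Fintype X] (L : Language X)
    (hL : L.IsRegular) : (cycLang L).IsRegular :=
  regular_closed_under_cyc_general L hL
end

section
/- Let M = (X, Q, q_0, P, δ) be a deterministic finite automaton accepting language L. For each state q ∈ Q let P_q be the language accepted by changing the accept set to {q}, and S_q the language accepted by changing the initial state to q. Then Cyc(L) = ⋃_{q ∈ Q} S_q · P_q. -/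
theorem DFA.append_mem_accepts_iff {X Q : Type*} (M : DFA X Q) (u v : List X) :
    u ++ v ∈ M.accepts ↔ M.evalFrom (M.eval u) v ∈ M.accept := by
  rw [DFA.mem_accepts, DFA.eval, DFA.evalFrom_of_append, ← DFA.eval]

/-- For a DFA `M` accepting `L`, with `P_q` the words sending the start state to `q` and
`S_q` the words sent from `q` into the accept set, the language of rotations of words of
`L` equals `⋃_q S_q · P_q`. -/
theorem cyc_eq_union_suffix_prefix {X Q : Type*} (M : DFA X Q) :
    {w : List X | ∃ u v : List X, u ++ v ∈ M.accepts ∧ w = v ++ u} =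
      ⋃ q : Q, {w : List X | ∃ s p : List X,
        M.evalFrom q s ∈ M.accept ∧ M.evalFrom M.start p = q ∧ w = s ++ p} := by
  ext w
  simp only [Set.mem_iUnion, Set.mem_ofPred_eq]
  constructor
  · rintro ⟨u, v, hacc, rfl⟩
    exact ⟨M.eval u, v, u, (M.append_mem_accepts_iff u v).mp hacc, rfl, rfl⟩
  · rintro ⟨q, s, p, hs, rfl, rfl⟩
    exact ⟨p, s, (M.append_mem_accepts_iff p s).mpr hs, rfl⟩
end

section
/- The strict growth series of the language of nonempty cyclically reduced words in the free group F_k on k generators (over the inverse-closed basis of size 2k) is F(z) = 1/(1−(2k−1)z) + 1/(1−z) + 2(k−1)/(1−z^2) − 2k; equivalently, for n ≥ 1 the number of cyclically reduced words of length n is (2k−1)^n + 1 + (k−1)(1 + (−1)^n). -/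
/-!
Counting cyclically reduced words of length `n` is counting closed walks of length `n` in the
graph on the `2k` letters where `x → y` unless `y = x⁻¹`, i.e. computing `trace Aⁿ` for
`A = J - Q`, with `J` the all-ones matrix and `Q` the permutation matrix of inversion.
Since `J² = 2k J`, `JQ = QJ = J` and `Q² = 1`, one gets `Aⁿ = aₙ J + (-Q)ⁿ` with
`2k aₙ = (2k - 1)ⁿ - (-1)ⁿ`, and `trace (-Q)ⁿ` is `2k` or `0` according to the parity of `n`.
-/

def NonCancelling {k : ℕ} (x y : Fin k × Bool) : Prop :=
  ¬ (x.1 = y.1 ∧ x.2 = !y.2)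

def CyclicallyReduced {k : ℕ} (w : List (Fin k × Bool)) : Prop :=
  ∀ i : ℕ, (w.rotate i).Chain' NonCancelling

namespace List

variable {α : Type*} {R : α → α → Prop}

theorem isChain_cons_append_singleton_self_iff {x : α} {l : List α} :
    (x :: l ++ [x]).IsChain R ↔ (x :: l ++ x :: l).IsChain R := by
  rw [isChain_append, isChain_append, isChain_cons (l := l)]
  simp

theorem forall_isChain_rotate_iff (hR : ∀ a, R a a) (x : α) (l : List α) :
    (∀ i, ((x :: l).rotate i).IsChain R) ↔ (x :: l ++ [x]).IsChain R := by
  constructor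
  · intro h
    have h₀ : (x :: l).IsChain R := by simpa using h 0
    have h₁ : (l ++ [x]).IsChain R := by simpa using h 1
    refine isChain_append.2 ⟨h₀, isChain_singleton x, ?_⟩
    cases l with
    | nil => simp [hR]
    | cons y l' => rw [getLast?_cons_cons]; exact (isChain_append.1 h₁).2.2
  · intro h i
    -- every rotation of `x :: l` is an infix of `x :: l ++ x :: l`
    have hi : i % (x :: l).length ≤ (x :: l).length := (Nat.mod_lt _ (by simp)).le
    rw [← rotate_mod, rotate_eq_drop_append_take hi]
    refine (isChain_cons_append_singleton_self_iff.1 h).infix ?_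
    conv_rhs => rw [← take_append_drop (i % (x :: l).length) (x :: l)]
    simpa only [append_assoc] using
      infix_append (take _ (x :: l)) (drop _ (x :: l) ++ take _ (x :: l)) (drop _ (x :: l))

end List

theorem neg_pow_mul_eq_of_mul_eq {A : Type*} [Ring A] {J Q : A} (hQJ : Q * J = J) (n : ℕ) :
    (-Q) ^ n * J = (-1 : ℤ) ^ n • J := by
  induction n with
  | zero => simp
  | succ n ih => rw [pow_succ, mul_assoc, neg_mul, hQJ, mul_neg, ih, pow_succ, mul_neg_one,
      neg_smul]

theorem exists_sub_pow_eq_smul_add_neg_pow {A : Type*} [Ring A] {J Q : A} {c : ℤ}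
    (hJJ : J * J = c • J) (hJQ : J * Q = J) (hQJ : Q * J = J) (n : ℕ) :
    ∃ a : ℤ, c * a = (c - 1) ^ n - (-1) ^ n ∧ (J - Q) ^ n = a • J + (-Q) ^ n := by
  induction n with
  | zero => exact ⟨0, by simp, by simp⟩
  | succ n ih =>
    obtain ⟨a, ha, hpow⟩ := ih
    refine ⟨(c - 1) * a + (-1) ^ n, by linear_combination (c - 1) * ha, ?_⟩
    rw [pow_succ, hpow, add_mul, smul_mul_assoc, mul_sub, hJJ, hJQ, mul_sub,
      neg_pow_mul_eq_of_mul_eq hQJ, pow_succ (-Q), mul_neg]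
    module

namespace Matrix

def relMatrix (S : Type*) [Zero S] [One S] {α : Type*} (R : α → α → Prop) [DecidableRel R] :
    Matrix α α S :=
  of fun a b => if R a b then 1 else 0

section Walks

variable {α S : Type*} [Fintype α] [DecidableEq α] [Semiring S]
  (R : α → α → Prop) [DecidableRel R]

theorem sum_isChain_ofFn_eq_relMatrix_pow (n : ℕ) (x y : α) :
    ∑ f : Fin n → α, (if (x :: List.ofFn f ++ [y]).IsChain R then 1 else 0 : S) =
      (relMatrix S R ^ (n + 1)) x y := by
  induction n generalizing x with
  | zero => simp [relMatrix]
  | succ n ih =>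
    rw [pow_succ', mul_apply, ← (Fin.consEquiv fun _ => α).sum_comp, Fintype.sum_prod_type]
    refine Finset.sum_congr rfl fun z _ => ?_
    rw [← ih, Finset.mul_sum]
    refine Finset.sum_congr rfl fun g _ => ?_
    simp only [show (Fin.consEquiv fun _ => α) (z, g) = Fin.cons z g from rfl, List.ofFn_cons,
      List.cons_append, List.isChain_cons_cons, relMatrix, of_apply, ite_and, ite_mul, one_mul,
      zero_mul]

theorem ncard_forall_isChain_rotate (hR : ∀ a, R a a) (n : ℕ) :
    ({w : List α | w.length = n + 1 ∧ ∀ i, (w.rotate i).IsChain R}.ncard : S) =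
      trace (relMatrix S R ^ (n + 1)) := by
  have hset : {w : List α | w.length = n + 1 ∧ ∀ i, (w.rotate i).IsChain R} =
      (fun p : α × (Fin n → α) => p.1 :: List.ofFn p.2) ''
        {p | (p.1 :: List.ofFn p.2 ++ [p.1]).IsChain R} := by
    ext w
    constructor
    · rintro ⟨hlen, hw⟩
      obtain ⟨x, l, rfl⟩ := List.exists_cons_of_length_eq_add_one hlen
      obtain rfl : l.length = n := by simpa using hlen
      exact ⟨(x, l.get), by simpa [List.forall_isChain_rotate_iff hR] using hw, by simp⟩
    · rintro ⟨⟨x, f⟩, hf, rfl⟩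
      exact ⟨by simp, (List.forall_isChain_rotate_iff hR x _).2 hf⟩
  have hinj : Function.Injective fun p : α × (Fin n → α) => p.1 :: List.ofFn p.2 :=
    fun p q h => Prod.ext (List.cons.inj h).1 (List.ofFn_injective (List.cons.inj h).2)
  rw [hset, Set.ncard_image_of_injective _ hinj, Set.ncard_eq_toFinset_card', Set.toFinset_ofPred,
    Finset.card_filter, Nat.cast_sum, Fintype.sum_prod_type, trace]
  refine Finset.sum_congr rfl fun x _ => ?_
  rw [diag_apply, ← sum_isChain_ofFn_eq_relMatrix_pow]
  simp only [Nat.cast_ite, Nat.cast_one, Nat.cast_zero]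

end Walks

variable {α S : Type*} {σ : α → α}

theorem relMatrix_ne_apply [DecidableEq α] [Ring S] :
    relMatrix S (fun x y => y ≠ σ x) = of (fun _ _ => 1) - relMatrix S (fun x y => y = σ x) := by
  ext x y
  by_cases h : y = σ x <;> simp [relMatrix, h]

theorem relMatrix_eq_apply_mul_self [Fintype α] [DecidableEq α] [Semiring S] (hσ : Function.Involutive σ) :
    relMatrix S (fun x y => y = σ x) * relMatrix S (fun x y => y = σ x) = 1 := by
  ext x y
  simp only [relMatrix, mul_apply, of_apply, ite_mul, one_mul, zero_mul, Finset.sum_ite_eq',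
    Finset.mem_univ, if_true, hσ x, one_apply, eq_comm]

theorem ones_mul_ones [Fintype α] [Semiring S] : (of fun _ _ => 1 : Matrix α α S) * of (fun _ _ => 1) =
    (Fintype.card α : S) • of (fun _ _ => 1) := by
  ext x y
  simp [mul_apply]

theorem ones_mul_relMatrix_eq_apply [Fintype α] [DecidableEq α] [Semiring S] (hσ : Function.Involutive σ) :
    (of fun _ _ => 1 : Matrix α α S) * relMatrix S (fun x y => y = σ x) = of (fun _ _ => 1) := by
  ext x y
  simp [relMatrix, mul_apply, hσ.eq_iff.symm]

theorem relMatrix_eq_apply_mul_ones [Fintype α] [DecidableEq α] [Semiring S] :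
    relMatrix S (fun x y => y = σ x) * (of fun _ _ => 1 : Matrix α α S) = of (fun _ _ => 1) := by
  ext x y
  simp [relMatrix, mul_apply]

theorem trace_relMatrix_eq_apply [Fintype α] [DecidableEq α] [Semiring S]
    (hfix : ∀ x, σ x ≠ x) : trace (relMatrix S (fun x y => y = σ x)) = 0 := by
  simp [trace, relMatrix, fun x => (hfix x).symm]

theorem trace_neg_relMatrix_eq_apply_pow [Fintype α] [DecidableEq α] (hσ : Function.Involutive σ) (hfix : ∀ x, σ x ≠ x)
    (n : ℕ) : trace ((-relMatrix ℤ (fun x y => y = σ x)) ^ n) =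
      if Even n then (Fintype.card α : ℤ) else 0 := by
  obtain ⟨m, rfl | rfl⟩ := n.even_or_odd'
  · rw [pow_mul, neg_sq, sq, relMatrix_eq_apply_mul_self hσ, one_pow, trace_one]
    simp
  · rw [pow_succ, pow_mul, neg_sq, sq, relMatrix_eq_apply_mul_self hσ, one_pow, one_mul,
      trace_neg, trace_relMatrix_eq_apply hfix]
    simp

theorem trace_relMatrix_ne_apply_pow [Fintype α] [DecidableEq α] (hσ : Function.Involutive σ) (hfix : ∀ x, σ x ≠ x)
    (n : ℕ) : trace (relMatrix ℤ (fun x y => y ≠ σ x) ^ n) =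
      ((Fintype.card α : ℤ) - 1) ^ n - (-1) ^ n + if Even n then (Fintype.card α : ℤ) else 0 := by
  obtain ⟨a, ha, hpow⟩ := exists_sub_pow_eq_smul_add_neg_pow (A := Matrix α α ℤ)
    ones_mul_ones (ones_mul_relMatrix_eq_apply hσ) relMatrix_eq_apply_mul_ones n
  rw [relMatrix_ne_apply, hpow, trace_add, trace_smul, trace_neg_relMatrix_eq_apply_pow hσ hfix,
    ← ha, smul_eq_mul]
  simp [trace, mul_comm]

end Matrix

theorem nonCancelling_iff {k : ℕ} {x y : Fin k × Bool} :
    NonCancelling x y ↔ y ≠ Prod.map id not x := by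
  obtain ⟨a, b⟩ := x
  obtain ⟨c, d⟩ := y
  cases b <;> cases d <;> simp [NonCancelling, eq_comm]

theorem cyclicallyReduced_iff {k : ℕ} {w : List (Fin k × Bool)} :
    CyclicallyReduced w ↔ ∀ i, (w.rotate i).IsChain fun x y => y ≠ Prod.map id not x := by
  have hNC : @NonCancelling k = fun x y => y ≠ Prod.map id not x :=
    funext₂ fun _ _ => propext nonCancelling_iff
  rw [CyclicallyReduced, hNC]
  exact Iff.rfl

theorem cyclically_reduced_count_general (k : ℕ) (n : ℕ) (hn : 1 ≤ n) :
    (Set.ncard {w : List (Fin k × Bool) | w.length = n ∧ CyclicallyReduced w} : ℤ) =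
      ((2 * k : ℤ) - 1) ^ n + 1 + ((k : ℤ) - 1) * (1 + (-1 : ℤ) ^ n) := by
  obtain ⟨m, rfl⟩ := Nat.exists_eq_add_of_le' hn
  have hσ : Function.Involutive (Prod.map id not : Fin k × Bool → Fin k × Bool) :=
    Function.Involutive.prodMap (fun _ => rfl) Bool.not_not
  have hfix : ∀ x : Fin k × Bool, Prod.map id not x ≠ x := fun x h =>
    Bool.not_ne_self x.2 (congrArg Prod.snd h)
  simp only [cyclicallyReduced_iff]
  rw [Matrix.ncard_forall_isChain_rotate _ (fun x => (hfix x).symm),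
    Matrix.trace_relMatrix_ne_apply_pow hσ hfix]
  rw [Fintype.card_prod, Fintype.card_fin, Fintype.card_bool]
  rcases Nat.even_or_odd (m + 1) with h | h
  · rw [if_pos h, h.neg_one_pow]
    push_cast
    ring
  · rw [if_neg (Nat.not_even_iff_odd.2 h), h.neg_one_pow]
    push_cast
    ring

/-- The number of cyclically reduced words of length `n ≥ 1` in the free group `F_k`
over the inverse-closed basis of size `2k` is `(2k-1)^n + 1 + (k-1)(1 + (-1)^n)`;
equivalently, the growth series of the language of nonempty cyclically reduced words is
`1/(1-(2k-1)z) + 1/(1-z) + 2(k-1)/(1-z²) - 2k`. -/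
theorem cyclically_reduced_count (k : ℕ) (hk : 1 ≤ k) (n : ℕ) (hn : 1 ≤ n) :
    (Set.ncard {w : List (Fin k × Bool) | w.length = n ∧ CyclicallyReduced w} : ℤ) =
      ((2 * k : ℤ) - 1) ^ n + 1 + ((k : ℤ) - 1) * (1 + (-1 : ℤ) ^ n) :=
  cyclically_reduced_count_general k n hn
end
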